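/- Fix d ≥ 1 and permutations p_x, p_y of Fin d such that the subgroup generated by p_x and p_y acts transitively on Fin d, let p_z := p_x⁻¹ ∘ p_y⁻¹, let (m_A, m_B) be the M-Origami pair associated to (p_x, p_y), and let K := m_A ∘ m_B ∘ m_A⁻¹ ∘ m_B⁻¹. Define the rational numbers g_Y := (2 + d − c(p_x) − c(p_y) − c(p_z))/2 and g_X := (2 + 4d − c(K))/2. Then g_Y + d/4 ≤ g_X ≤ g_Y + d. -/

import Mathlib

/-- `m_A` of the M-Origami pair associated to `(p_x, p_y)`
(squares labelled `0,1,2,3` instead of `1,2,3,4`):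
`m_A (0,j) = (1,j)`, `m_A (1,j) = (0, p_y j)`, `m_A (2,j) = (3,j)`, `m_A (3,j) = (2, p_y⁻¹ j)`. -/
def mOrigamiA {d : ℕ} (py : Equiv.Perm (Fin d)) : Equiv.Perm (Fin 4 × Fin d) :=
  Equiv.prodShear (Equiv.swap 0 1 * Equiv.swap 2 3 : Equiv.Perm (Fin 4))
    (fun i => if i = 1 then py else if i = 3 then py⁻¹ else Equiv.refl (Fin d))

/-- `m_B` of the M-Origami pair associated to `(p_x, p_y)`:
`m_B (0,j) = (2,j)`, `m_B (1,j) = (3,j)`, `m_B (2,j) = (0, p_x⁻¹ j)`, `m_B (3,j) = (1, p_x j)`. -/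
def mOrigamiB {d : ℕ} (px : Equiv.Perm (Fin d)) : Equiv.Perm (Fin 4 × Fin d) :=
  Equiv.prodShear (Equiv.swap 0 2 * Equiv.swap 1 3 : Equiv.Perm (Fin 4))
    (fun i => if i = 2 then px⁻¹ else if i = 3 then px else Equiv.refl (Fin d))

/-- `c(σ)`: the number of orbits of the cyclic group generated by `σ`
(i.e., the number of cycles of `σ`, counting fixed points as cycles of length 1). -/
noncomputable def cyc {S : Type*} (σ : Equiv.Perm S) : ℕ :=
  Nat.card (MulAction.orbitRel.Quotient (Subgroup.zpowers σ) S)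

/-! The commutator `K = m_A m_B m_A⁻¹ m_B⁻¹` preserves the square coordinate and acts on the
four fibres `{i} × Fin d` by `p_z⁻², p_x⁻², p_y⁻²` and the identity, so
`c(K) = c(p_z²) + c(p_x²) + c(p_y²) + d`. Both bounds then follow from
`c(σ) ≤ c(σ²) ≤ c(σ) + d/2`: the cycles of `σ²` refine those of `σ`, each cycle of `σ` splits
into at most two of them, and there are at most `d` of them. -/

open MulAction Subgroup Equiv

section Cycles

variable {S : Type*}

lemma orbitRel_zpowers_iff_exists_pow [Finite S] {σ : Perm S} {x y : S} :
    orbitRel (zpowers σ) S x y ↔ ∃ n : ℕ, (σ ^ n) y = x := by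
  rw [orbitRel_apply, mem_orbit_iff, exists_zpowers]
  constructor
  · rintro ⟨k, hk⟩
    obtain ⟨n, hn⟩ := (isOfFinOrder_of_finite σ).mem_powers_iff_mem_zpowers.2 ⟨k, rfl⟩
    exact ⟨n, by simp only at hn; rw [hn]; exact hk⟩
  · rintro ⟨n, hn⟩
    exact ⟨n, by simpa using hn⟩

lemma cyc_inv (σ : Perm S) : cyc σ⁻¹ = cyc σ := by
  rw [cyc, zpowers_inv, cyc]

lemma cyc_le_card [Finite S] (σ : Perm S) : cyc σ ≤ Nat.card S :=
  Nat.card_le_card_of_surjective _ Quotient.mk''_surjective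

lemma cyc_one [Finite S] : cyc (1 : Perm S) = Nat.card S := by
  refine (Nat.card_congr (Equiv.ofBijective Quotient.mk'' ⟨fun x y h => ?_,
    Quotient.mk''_surjective⟩)).symm
  obtain ⟨n, hn⟩ := orbitRel_zpowers_iff_exists_pow.1 (Quotient.exact' h)
  simpa using hn.symm

lemma cyc_le_cyc_pow [Finite S] (σ : Perm S) (n : ℕ) : cyc σ ≤ cyc (σ ^ n) := by
  refine Nat.card_le_card_of_surjective (Quotient.map' id fun x y h => ?_) ?_
  · obtain ⟨k, hk⟩ := orbitRel_zpowers_iff_exists_pow.1 h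
    exact orbitRel_zpowers_iff_exists_pow.2 ⟨n * k, by rwa [pow_mul]⟩
  · rintro ⟨x⟩
    exact ⟨Quotient.mk'' x, rfl⟩

/-- Every `σ`-orbit splits into at most `n` orbits of `σ ^ n`, represented by
`x, σ x, …, σ ^ (n - 1) x` for any `x` in it. -/
lemma cyc_pow_le_mul_cyc [Finite S] (σ : Perm S) {n : ℕ} (hn : 0 < n) :
    cyc (σ ^ n) ≤ n * cyc σ := by
  let rep : orbitRel.Quotient (zpowers σ) S × Fin n → orbitRel.Quotient (zpowers (σ ^ n)) S :=
    fun p => Quotient.mk'' ((σ ^ (p.2 : ℕ)) p.1.out)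
  have hrep : Function.Surjective rep := by
    rintro ⟨y⟩
    obtain ⟨m, hm⟩ := orbitRel_zpowers_iff_exists_pow.1
      ((orbitRel _ S).symm' (Quotient.mk_out' (s₁ := orbitRel (zpowers σ) S) y))
    refine ⟨(Quotient.mk'' y, ⟨m % n, Nat.mod_lt m hn⟩),
      Quotient.sound' ((orbitRel _ S).symm' (orbitRel_zpowers_iff_exists_pow.2 ⟨m / n, ?_⟩))⟩
    rw [← Perm.mul_apply, ← pow_mul, ← pow_add, Nat.div_add_mod, hm]
  calc cyc (σ ^ n) ≤ Nat.card (orbitRel.Quotient (zpowers σ) S × Fin n) :=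
        Nat.card_le_card_of_surjective rep hrep
    _ = n * cyc σ := by rw [Nat.card_prod, Nat.card_fin, mul_comm, cyc]

lemma two_mul_cyc_sq_le [Finite S] (σ : Perm S) :
    2 * cyc (σ ^ 2) ≤ 2 * cyc σ + Nat.card S := by
  have := cyc_pow_le_mul_cyc σ two_pos
  have := cyc_le_card (σ ^ 2)
  omega

end Cycles

section Shear

variable {α β : Type*}

def shearHom : (α → Perm β) →* Perm (α × β) where
  toFun f := Equiv.prodShear (Equiv.refl α) f
  map_one' := rfl
  map_mul' _ _ := rfl

lemma shearHom_pow_apply (f : α → Perm β) (n : ℕ) (p : α × β) :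
    (shearHom f ^ n) p = (p.1, (f p.1 ^ n) p.2) := by
  rw [← map_pow]
  rfl

lemma orbitRel_shearHom_iff [Finite α] [Finite β] {f : α → Perm β} {p q : α × β} :
    orbitRel (zpowers (shearHom f)) (α × β) p q ↔
      p.1 = q.1 ∧ orbitRel (zpowers (f q.1)) β p.2 q.2 := by
  simp only [orbitRel_zpowers_iff_exists_pow, shearHom_pow_apply, Prod.ext_iff]
  tauto

noncomputable def shearQuotientEquiv [Finite α] [Finite β] (f : α → Perm β) :
    orbitRel.Quotient (zpowers (shearHom f)) (α × β) ≃
      Σ a : α, orbitRel.Quotient (zpowers (f a)) β where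
  toFun := Quotient.lift (fun p => ⟨p.1, Quotient.mk'' p.2⟩) fun p q h => by
    obtain ⟨h1, h2⟩ := orbitRel_shearHom_iff.1 h
    obtain ⟨a, b⟩ := p
    obtain ⟨a', b'⟩ := q
    dsimp only at h1 h2 ⊢
    subst h1
    exact Sigma.ext rfl (heq_of_eq (Quotient.sound' h2))
  invFun x := Quotient.lift (fun b => Quotient.mk'' (x.1, b))
    (fun _ _ h => Quotient.sound' (orbitRel_shearHom_iff.2 ⟨rfl, h⟩)) x.2
  left_inv := by
    rintro ⟨p⟩
    rfl
  right_inv := by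
    rintro ⟨a, ⟨b⟩⟩
    rfl

lemma cyc_shearHom [Fintype α] [Finite β] (f : α → Perm β) :
    cyc (shearHom f) = ∑ a, cyc (f a) := by
  rw [cyc, Nat.card_congr (shearQuotientEquiv f), Nat.card_sigma]
  rfl

end Shear

section MOrigami

variable {d : ℕ}

def mOrigamiCommutatorFiber (px py : Perm (Fin d)) : Fin 4 → Perm (Fin d) :=
  ![(py * px) ^ 2, px⁻¹ ^ 2, py⁻¹ ^ 2, 1]

lemma mOrigami_commutator_eq_shearHom (px py : Perm (Fin d)) :
    mOrigamiA py * mOrigamiB px * (mOrigamiA py)⁻¹ * (mOrigamiB px)⁻¹ =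
      shearHom (mOrigamiCommutatorFiber px py) := by
  rw [mul_inv_eq_iff_eq_mul, mul_inv_eq_iff_eq_mul]
  ext ⟨i, j⟩ : 1
  fin_cases i <;>
    simp [mOrigamiCommutatorFiber, shearHom, mOrigamiA, mOrigamiB, Equiv.prodShear,
      Perm.mul_apply, Equiv.swap_apply_def, pow_two]

lemma cyc_mOrigami_commutator (px py : Perm (Fin d)) :
    cyc (mOrigamiA py * mOrigamiB px * (mOrigamiA py)⁻¹ * (mOrigamiB px)⁻¹) =
      cyc ((px⁻¹ * py⁻¹) ^ 2) + cyc (px ^ 2) + cyc (py ^ 2) + d := by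
  rw [mOrigami_commutator_eq_shearHom, cyc_shearHom, Fin.sum_univ_four, ← mul_inv_rev,
    inv_pow, cyc_inv]
  simp [mOrigamiCommutatorFiber, inv_pow, cyc_inv, cyc_one]

end MOrigami

theorem mOrigami_genus_bounds_general {d : ℕ} (px py : Equiv.Perm (Fin d))
    (pz : Equiv.Perm (Fin d)) (hpz : pz = px⁻¹ * py⁻¹)
    (K : Equiv.Perm (Fin 4 × Fin d))
    (hK : K = mOrigamiA py * mOrigamiB px * (mOrigamiA py)⁻¹ * (mOrigamiB px)⁻¹)
    (gY gX : ℚ)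
    (hgY : gY = (2 + (d : ℚ) - cyc px - cyc py - cyc pz) / 2)
    (hgX : gX = (2 + 4 * (d : ℚ) - cyc K) / 2) :
    gY + (d : ℚ) / 4 ≤ gX ∧ gX ≤ gY + d := by
  have hcycK : (cyc K : ℚ) = cyc (pz ^ 2) + cyc (px ^ 2) + cyc (py ^ 2) + d := by
    rw [hK, hpz, cyc_mOrigami_commutator]
    push_cast
    ring
  have sq_bounds (σ : Perm (Fin d)) :
      (cyc σ : ℚ) ≤ cyc (σ ^ 2) ∧ 2 * (cyc (σ ^ 2) : ℚ) ≤ 2 * cyc σ + d := by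
    have upper := two_mul_cyc_sq_le σ
    rw [Nat.card_fin] at upper
    exact ⟨mod_cast cyc_le_cyc_pow σ 2, mod_cast upper⟩
  obtain ⟨hx, hx'⟩ := sq_bounds px
  obtain ⟨hy, hy'⟩ := sq_bounds py
  obtain ⟨hz, hz'⟩ := sq_bounds pz
  subst hgY hgX
  constructor <;> linarith

/-- Genus bounds for M-Origamis: `g_Y + d/4 ≤ g_X ≤ g_Y + d`. -/
theorem mOrigami_genus_bounds {d : ℕ} (hd : 1 ≤ d) (px py : Equiv.Perm (Fin d))
    (htrans : ∀ i j : Fin d,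
      ∃ g ∈ Subgroup.closure ({px, py} : Set (Equiv.Perm (Fin d))), g i = j)
    (pz : Equiv.Perm (Fin d)) (hpz : pz = px⁻¹ * py⁻¹)
    (K : Equiv.Perm (Fin 4 × Fin d))
    (hK : K = mOrigamiA py * mOrigamiB px * (mOrigamiA py)⁻¹ * (mOrigamiB px)⁻¹)
    (gY gX : ℚ)
    (hgY : gY = (2 + (d : ℚ) - cyc px - cyc py - cyc pz) / 2)
    (hgX : gX = (2 + 4 * (d : ℚ) - cyc K) / 2) :
    gY + (d : ℚ) / 4 ≤ gX ∧ gX ≤ gY + d :=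
  mOrigami_genus_bounds_general px py pz hpz K hK gY gX hgY hgX
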